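/- Let n, j, k be positive integers with 2 ≤ j ≤ √n and ⌊n/j⌋ + j − 1 ≤ k ≤ ⌊n/(j−1)⌋ + j − 3. Then N(n, k) = n − j + 1. -/

import Mathlib

/-- A set `S` of permutations of `{1,…,n}` (modelled as `Fin n`) is `k`-suitable if for
every pointed `k`-subset `(A, a)` there is `σ ∈ S` with `σ b ≤ σ a` for every `b ∈ A`. -/
def IsSuitable (n k : ℕ) (S : Finset (Equiv.Perm (Fin n))) : Prop :=
  ∀ A : Finset (Fin n), A.card = k → ∀ a ∈ A, ∃ σ ∈ S, ∀ b ∈ A, σ b ≤ σ a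

/-- `N(n, k)`: the minimum cardinality of a `k`-suitable set of permutations of `{1,…,n}`. -/
noncomputable def suitableNumber (n k : ℕ) : ℕ :=
  sInf {m : ℕ | ∃ S : Finset (Equiv.Perm (Fin n)), IsSuitable n k S ∧ S.card = m}

/-!
Lower bound: let `S` be `k`-suitable with `|S| + j ≤ n`. Some `j`-set `X` contains no element
that a permutation of `S` ranks highest overall. Sending each `σ ∈ S` to the element of `X` it
ranks highest, some `x ∈ X` is hit by at most `⌊|S|/j⌋` permutations; the pointed set made of `X`
and the overall winners of those permutations, pointed at `x`, has at most `j + ⌊|S|/j⌋` elements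
and no permutation of `S` ranks `x` highest in it. Hence `k < j + ⌊|S|/j⌋`.

Upper bound: write `j = m + 2` and fix `m + 1` special elements `s r` and `m + 1` disjoint blocks of
`q = ⌊n/(m+1)⌋ - 1` further elements. For every non-special `x` take a permutation ranking `x`
first, then `s r` if `x` lies in block `r`, and then, if `x` is among the first `m` elements of its
block, one of the other specials, arranged so that every special comes third for some element of
every other block. Only the `n - m - 1` non-special elements index permutations, and a pointed set
at a special element is served unless its other `k - 1` elements meet `q + m` pairwise disjoint
obstruction sets.
-/

open Finset Function

theorem suitableNumber_le {n k : ℕ} {S : Finset (Equiv.Perm (Fin n))} (hS : IsSuitable n k S) :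
    suitableNumber n k ≤ S.card :=
  Nat.sInf_le ⟨S, hS, rfl⟩

theorem le_suitableNumber {n k c : ℕ} (hex : ∃ S, IsSuitable n k S)
    (h : ∀ S, IsSuitable n k S → c ≤ S.card) : c ≤ suitableNumber n k := by
  obtain ⟨S, hS⟩ := hex
  exact le_csInf ⟨S.card, S, hS, rfl⟩ (by rintro _ ⟨S, hS, rfl⟩; exact h S hS)

theorem IsSuitable.lt_add_card_div {n k j : ℕ} {S : Finset (Equiv.Perm (Fin n))}
    (hS : IsSuitable n k S) (hkn : k ≤ n) (hj : 0 < j) (hSj : S.card + j ≤ n) :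
    k < j + S.card / j := by
  classical
  by_contra! hk
  have : Nonempty (Fin n) := ⟨⟨0, by omega⟩⟩
  choose top htop using fun σ : Equiv.Perm (Fin n) => Finite.exists_max σ
  obtain ⟨X, hXT, hX⟩ : ∃ X ⊆ (S.image top)ᶜ, X.card = j := exists_subset_card_eq (by
    rw [card_compl, Fintype.card_fin]; have := card_image_le (s := S) (f := top); omega)
  choose best hbest hbest_max using fun σ : Equiv.Perm (Fin n) =>
    exists_max_image X σ (card_pos.mp (by omega))
  obtain ⟨x, hxX, hfiber⟩ := exists_card_fiber_lt_of_card_lt_mul (s := S) (t := X) (f := best)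
    (n := S.card / j + 1) (by rw [hX]; exact Nat.lt_mul_div_succ _ hj)
  set F := S.filter (best · = x)
  have hcard : (X ∪ F.image top).card ≤ k := calc
    _ ≤ X.card + (F.image top).card := card_union_le _ _
    _ ≤ j + S.card / j := by have := card_image_le (s := F) (f := top); omega
    _ ≤ k := hk
  obtain ⟨A, hA, -, hAk⟩ := exists_subsuperset_card_eq (subset_univ _) hcard (by simpa using hkn)
  obtain ⟨σ, hσS, hσ⟩ := hS A hAk x (hA (mem_union_left _ hxX))
  by_cases hbx : best σ = x
  · have htopA : top σ ∈ A :=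
      hA (mem_union_right _ (mem_image_of_mem _ (mem_filter.mpr ⟨hσS, hbx⟩)))
    have : x = top σ := σ.injective (le_antisymm (htop σ x) (hσ _ htopA))
    exact mem_compl.mp (hXT hxX) (this ▸ mem_image_of_mem top hσS)
  · exact hbx (σ.injective (le_antisymm (hσ _ (hA (mem_union_left _ (hbest σ))))
      (hbest_max σ x hxX)))

theorem IsSuitable.sub_add_one_le_card {n k j : ℕ} {S : Finset (Equiv.Perm (Fin n))}
    (hS : IsSuitable n k S) (hkn : k ≤ n) (hj : 0 < j) (hjn : j ≤ n)
    (hk : n / j + j - 1 ≤ k) : n - j + 1 ≤ S.card := by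
  by_contra! hS_card
  have := hS.lt_add_card_div hkn hj (by omega)
  have := Nat.div_le_div_right (c := j) (show S.card ≤ n - j by omega)
  have := Nat.div_eq_sub_div hj hjn
  omega

theorem exists_perm_forall_le_of_injective {t n : ℕ} (f : Fin t → Fin n) (hf : Injective f) :
    ∃ σ : Equiv.Perm (Fin n), ∀ i b, (∀ i' < i, b ≠ f i') → σ b ≤ σ (f i) := by
  have htn : t ≤ n := by simpa using Fintype.card_le_of_injective f hf
  obtain ⟨σ, hσ⟩ := Equiv.Perm.exists_extending_pair f (fun i => (Fin.castLE htn i).rev) hf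
    (Fin.rev_injective.comp (Fin.castLE_injective htn))
  refine ⟨σ, fun i b hb => ?_⟩
  by_contra! hlt
  have hc : (σ b).rev.val < i := by
    rw [hσ] at hlt; simp only [Fin.lt_def, Fin.val_rev, Fin.val_castLE] at hlt ⊢; omega
  refine hb ⟨_, hc.trans i.2⟩ hc (σ.injective ?_)
  rw [hσ]; ext; simp only [Fin.val_rev, Fin.val_castLE]; omega

theorem exists_disjoint_of_card_lt {α ι : Type*} [Fintype ι] {W : ι → Finset α}
    (hW : Pairwise (Disjoint on W)) {B : Finset α} (hB : B.card < Fintype.card ι) :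
    ∃ c, Disjoint B (W c) := by
  by_contra! h
  choose f hfB hfW using fun c => not_disjoint_iff.mp (h c)
  have hf : Injective f := fun c c' hcc' =>
    by_contra fun hne => disjoint_left.mp (hW hne) (hfW c) (hcc' ▸ hfW c')
  have := card_le_card_of_injOn (s := univ) f (fun c _ => hfB c) hf.injOn
  rw [card_univ] at this
  omega

section Blocks

variable {n m q : ℕ} (φ : Fin (m + 1) ⊕ Fin (m + 1) × Fin q ↪ Fin n) (hmq : m ≤ q)

/-- `φ (.inl r)` is the special element `s r` and `φ (.inr (r, d))` the `d`-th element of block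
`r`. A block ranking for `x` ranks `x` highest; if `x` is in block `r` it ranks `s r` second, and if
moreover `x` is the `t`-th element of the block with `t < m`, it ranks `s (r.succAbove t)` third. -/
def IsBlockRanking (x : Fin n) (σ : Equiv.Perm (Fin n)) : Prop :=
  (∀ b, σ b ≤ σ x) ∧
  (∀ r d, x = φ (.inr (r, d)) → ∀ b ≠ x, σ b ≤ σ (φ (.inl r))) ∧
  (∀ r t, x = φ (.inr (r, Fin.castLE hmq t)) → ∀ b ≠ x, b ≠ φ (.inl r) →
    σ b ≤ σ (φ (.inl (r.succAbove t))))

theorem exists_isBlockRanking (x : Fin n) : ∃ σ, IsBlockRanking φ hmq x σ := by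
  by_cases h3 : ∃ r t, x = φ (.inr (r, Fin.castLE hmq t))
  · obtain ⟨r, t, rfl⟩ := h3
    obtain ⟨σ, hσ⟩ := exists_perm_forall_le_of_injective
      ![φ (.inr (r, Fin.castLE hmq t)), φ (.inl r), φ (.inl (r.succAbove t))]
      (by simp [Injective, Fin.forall_fin_succ, eq_comm])
    refine ⟨σ, fun b => hσ 0 b (by simp), ?_, ?_⟩
    · intro r' d' h b hb
      obtain ⟨rfl, rfl⟩ : r' = r ∧ d' = Fin.castLE hmq t := by simpa [eq_comm] using h
      exact hσ 1 b (by simp [Fin.lt_def, hb])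
    · intro r' t' h b hb hb'
      obtain ⟨rfl, rfl⟩ : r' = r ∧ t' = t := by simpa [eq_comm, Fin.castLE_inj] using h
      exact hσ 2 b (by simp [Fin.forall_fin_succ, Fin.lt_def, hb, hb'])
  by_cases h2 : ∃ r d, x = φ (.inr (r, d))
  · obtain ⟨r, d, rfl⟩ := h2
    obtain ⟨σ, hσ⟩ := exists_perm_forall_le_of_injective ![φ (.inr (r, d)), φ (.inl r)]
      (by simp [Injective, Fin.forall_fin_succ, eq_comm])
    refine ⟨σ, fun b => hσ 0 b (by simp), ?_, fun r' t' h => absurd ⟨r', t', h⟩ h3⟩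
    intro r' d' h b hb
    obtain ⟨rfl, rfl⟩ : r' = r ∧ d' = d := by simpa [eq_comm] using h
    exact hσ 1 b (by simp [Fin.lt_def, hb])
  · obtain ⟨σ, hσ⟩ := exists_perm_forall_le_of_injective ![x] (injective_of_subsingleton _)
    exact ⟨σ, fun b => hσ 0 b (by simp), fun r d h => absurd ⟨r, d, h⟩ h2,
      fun r t h => absurd ⟨r, t, h⟩ h3⟩

theorem exists_forall_le_inl_of_isBlockRanking {σ : Fin n → Equiv.Perm (Fin n)}
    (hσ : ∀ x, IsBlockRanking φ hmq x (σ x)) (l : Fin (m + 1)) {A : Finset (Fin n)}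
    (hA : A.card ≤ q + m) (hl : φ (.inl l) ∈ A) :
    ∃ x, (∀ r, x ≠ φ (.inl r)) ∧ ∀ b ∈ A, σ x b ≤ σ x (φ (.inl l)) := by
  -- `W c` is what must avoid `A` for the `c`-th candidate ranking to serve `(A, s l)`: either an
  -- element of block `l`, or, for each other block, the element ranking `s l` third and its special.
  choose u hu using fun t : Fin m => Fin.exists_succAbove_eq (Fin.succAbove_ne l t).symm
  let W : Fin q ⊕ Fin m → Finset (Fin n) := Sum.elim (fun d => {φ (.inr (l, d))})
    (fun t => {φ (.inr (l.succAbove t, Fin.castLE hmq (u t))), φ (.inl (l.succAbove t))})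
  have hW : Pairwise (Disjoint on W) := by
    rintro (d | t) (d' | t') h <;>
      simp [W, onFun, Ne.symm (Fin.succAbove_ne _ _)] <;> simp_all [eq_comm]
  obtain ⟨c, hc⟩ := exists_disjoint_of_card_lt hW (B := A.erase (φ (.inl l))) (by
    have := card_pos.mpr ⟨_, hl⟩
    rw [card_erase_of_mem hl, Fintype.card_sum, Fintype.card_fin, Fintype.card_fin]
    omega)
  have hcA : ∀ b ∈ A, b ≠ φ (.inl l) → b ∉ W c := fun b hb hbl =>
    disjoint_left.mp hc (mem_erase.mpr ⟨hbl, hb⟩)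
  rcases c with d | t
  · refine ⟨φ (.inr (l, d)), by simp, fun b hb => ?_⟩
    rcases eq_or_ne b (φ (.inl l)) with rfl | hbl
    · rfl
    exact (hσ _).2.1 l d rfl b (by simpa [W] using hcA b hb hbl)
  · refine ⟨φ (.inr (l.succAbove t, Fin.castLE hmq (u t))), by simp, fun b hb => ?_⟩
    rcases eq_or_ne b (φ (.inl l)) with rfl | hbl
    · rfl
    have hbW := hcA b hb hbl
    simp only [W, Sum.elim_inr, mem_insert, mem_singleton, not_or] at hbW
    simpa [hu] using (hσ _).2.2 _ (u t) rfl b hbW.1 hbW.2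

end Blocks

theorem exists_isSuitable_card_le {n k m q : ℕ} (hmq : m ≤ q) (hk : k ≤ q + m)
    (hn : (m + 1) * (q + 1) ≤ n) : ∃ S, IsSuitable n k S ∧ S.card ≤ n - (m + 1) := by
  classical
  obtain ⟨φ⟩ : Nonempty (Fin (m + 1) ⊕ Fin (m + 1) × Fin q ↪ Fin n) :=
    Function.Embedding.nonempty_of_card_le (by simp; nlinarith)
  choose σ hσ using exists_isBlockRanking φ hmq
  let specials := univ.map (Embedding.inl.trans φ)
  refine ⟨specialsᶜ.image σ, fun A hA a ha => ?_, ?_⟩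
  · by_cases hs : ∃ l, a = φ (.inl l)
    · obtain ⟨l, rfl⟩ := hs
      obtain ⟨x, hx, hxA⟩ := exists_forall_le_inl_of_isBlockRanking φ hmq hσ l (hA.trans_le hk) ha
      exact ⟨σ x, mem_image_of_mem σ (by simpa [specials, eq_comm] using hx), hxA⟩
    · exact ⟨σ a, mem_image_of_mem σ (by simpa [specials, eq_comm] using hs),
        fun b _ => (hσ a).1 b⟩
  · calc _ ≤ specialsᶜ.card := card_image_le
      _ = n - (m + 1) := by simp [specials, card_compl]

theorem suitableNumber_eq_general (n j k : ℕ) (hj2 : 2 ≤ j)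
    (hjn : (j : ℝ) ≤ Real.sqrt n)
    (hk1 : n / j + j - 1 ≤ k) (hk2 : k ≤ n / (j - 1) + j - 3) :
    suitableNumber n k = n - j + 1 := by
  obtain ⟨m, rfl⟩ : ∃ m, j = m + 2 := ⟨j - 2, by omega⟩
  simp only [Nat.add_succ_sub_one] at hk2
  have hjj : (m + 2) * (m + 2) ≤ n := by
    rw [← sq]; exact_mod_cast (Real.le_sqrt (by positivity) (by positivity)).mp hjn
  have hmq : m + 1 ≤ n / (m + 1) := (Nat.le_div_iff_mul_le (by omega)).mpr (by nlinarith)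
  obtain ⟨q, hq⟩ : ∃ q, n / (m + 1) = q + 1 := ⟨n / (m + 1) - 1, by omega⟩
  have hblocks : (m + 1) * (q + 1) ≤ n := hq ▸ Nat.mul_div_le n (m + 1)
  have hkq : k ≤ q + m := by omega
  obtain ⟨S, hS, hS_card⟩ := exists_isSuitable_card_le (by omega) hkq hblocks
  refine le_antisymm ((suitableNumber_le hS).trans (by omega)) (le_suitableNumber ⟨S, hS⟩ ?_)
  exact fun T hT => hT.sub_add_one_le_card (by nlinarith) (by omega) (by nlinarith) hk1

/-- Dushnik's theorem: if `2 ≤ j ≤ √n` and `⌊n/j⌋ + j - 1 ≤ k ≤ ⌊n/(j-1)⌋ + j - 3`,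
then `N(n, k) = n - j + 1`. -/
theorem suitableNumber_eq (n j k : ℕ) (hn : 1 ≤ n) (hk : 1 ≤ k) (hj2 : 2 ≤ j)
    (hjn : (j : ℝ) ≤ Real.sqrt n)
    (hk1 : n / j + j - 1 ≤ k) (hk2 : k ≤ n / (j - 1) + j - 3) :
    suitableNumber n k = n - j + 1 :=
  suitableNumber_eq_general n j k hj2 hjn hk1 hk2
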